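/- arXiv:1703.07245 — 3 statements merged into one kernel-verified Lean document; each statement's English description precedes it below -/
import Mathlib

section
/- Let ν > 0, f > 0, and ξ(n) = n for all n (pure Stark case). Let j ∈ ℤ and ℓ₁ > 0 an integer, and S = {j, j+ℓ₁}. A normalized two-mode solution of (μ − ν d_n²) d_n = f n d_n with solution-set S exists if and only if ℓ₁ < ν/f, and in that case μ = ν/2 + (f/2)(2j + ℓ₁) and d_j² = 1/2 + (f ℓ₁)/(2ν), d_{j+ℓ₁}² = 1/2 − (f ℓ₁)/(2ν). -/
/-!
On its solution set a normalized solution satisfies `μ - ν d_n² = f ξ(n)`, so for a two-mode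
solution on `{p, q}` the two squared amplitudes and `μ` solve a linear system together with
`d_p² + d_q² = 1`. Its unique solution is `μ = ν/2 + f(ξ p + ξ q)/2`,
`d_p² = 1/2 + δ`, `d_q² = 1/2 - δ` with `δ = f(ξ q - ξ p)/(2ν)`; both amplitudes are nonzero
exactly when `|δ| < 1/2`, and then the square roots give a solution.
-/

open Finset

variable {ι : Type*}

theorem abs_div_two_mul_lt_half_iff {x ν : ℝ} (hν : 0 < ν) : |x / (2 * ν)| < 1 / 2 ↔ |x| < ν := by
  rw [abs_div, abs_of_pos (by positivity : 0 < 2 * ν), div_lt_iff₀ (by positivity)]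
  constructor <;> intro h <;> linarith

def IsNormalizedSolution (ν f : ℝ) (ξ : ι → ℝ) (S : Finset ι) (μ : ℝ) (d : ι → ℝ) : Prop :=
  (∀ n, d n ≠ 0 ↔ n ∈ S) ∧ (∀ n, (μ - ν * d n ^ 2) * d n = f * ξ n * d n) ∧
    ∑ n ∈ S, d n ^ 2 = 1

namespace IsNormalizedSolution

variable {ν f μ : ℝ} {ξ : ι → ℝ} {d : ι → ℝ} {p q : ι}

variable {S : Finset ι} {n : ι}

theorem ne_zero_of_mem (h : IsNormalizedSolution ν f ξ S μ d) (hn : n ∈ S) : d n ≠ 0 :=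
  (h.1 n).2 hn

theorem eq_of_mem (h : IsNormalizedSolution ν f ξ S μ d) (hn : n ∈ S) :
    μ - ν * d n ^ 2 = f * ξ n :=
  mul_right_cancel₀ (h.ne_zero_of_mem hn) (h.2.1 n)

variable [DecidableEq ι]

theorem two_mode_amplitudes (hν : ν ≠ 0) (hpq : p ≠ q)
    (h : IsNormalizedSolution ν f ξ {p, q} μ d) :
    μ = ν / 2 + f / 2 * (ξ p + ξ q) ∧
      d p ^ 2 = 1 / 2 + f * (ξ q - ξ p) / (2 * ν) ∧
      d q ^ 2 = 1 / 2 - f * (ξ q - ξ p) / (2 * ν) := by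
  have hp := h.eq_of_mem (mem_insert_self p {q})
  have hq := h.eq_of_mem (mem_insert_of_mem (mem_singleton_self q))
  have hsum : d p ^ 2 + d q ^ 2 = 1 := (sum_pair hpq).symm.trans h.2.2
  have hdiff : d p ^ 2 - d q ^ 2 = f * (ξ q - ξ p) / ν := by
    field_simp; linarith
  refine ⟨?_, ?_, ?_⟩
  · linear_combination hp / 2 + hq / 2 + ν / 2 * hsum
  · linear_combination hsum / 2 + hdiff / 2
  · linear_combination hsum / 2 - hdiff / 2

end IsNormalizedSolution

variable [DecidableEq ι]

theorem exists_two_mode_solution (ν f : ℝ) (ξ : ι → ℝ) (hν : 0 < ν) {p q : ι}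
    (hpq : p ≠ q) (hgap : |f * (ξ q - ξ p)| < ν) :
    ∃ μ d, IsNormalizedSolution ν f ξ {p, q} μ d := by
  set δ := f * (ξ q - ξ p) / (2 * ν)
  have hδ : |δ| < 1 / 2 := (abs_div_two_mul_lt_half_iff hν).2 hgap
  have hp : 0 < 1 / 2 + δ := by linarith [neg_abs_le δ]
  have hq : 0 < 1 / 2 - δ := by linarith [le_abs_self δ]
  let d : ι → ℝ := fun n => if n = p then √(1 / 2 + δ) else if n = q then √(1 / 2 - δ) else 0
  have hdp : d p = √(1 / 2 + δ) := if_pos rfl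
  have hdq : d q = √(1 / 2 - δ) := (if_neg hpq.symm).trans (if_pos rfl)
  have hd : ∀ n, n ≠ p → n ≠ q → d n = 0 := fun n hnp hnq => (if_neg hnp).trans (if_neg hnq)
  refine ⟨ν / 2 + f / 2 * (ξ p + ξ q), d, fun n => ?_, fun n => ?_, ?_⟩
  · by_cases hnp : n = p
    · subst hnp
      exact iff_of_true (hdp ▸ Real.sqrt_ne_zero'.2 hp) (mem_insert_self n {q})
    by_cases hnq : n = q
    · subst hnq
      exact iff_of_true (hdq ▸ Real.sqrt_ne_zero'.2 hq) (mem_insert_of_mem (mem_singleton_self n))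
    · simp [hnp, hnq, hd n hnp hnq]
  · by_cases hnp : n = p
    · rw [hnp, hdp, Real.sq_sqrt hp.le]; congr 1; simp only [δ]; field_simp; ring
    by_cases hnq : n = q
    · rw [hnq, hdq, Real.sq_sqrt hq.le]; congr 1; simp only [δ]; field_simp; ring
    · simp [hd n hnp hnq]
  · rw [sum_pair hpq, hdp, hdq, Real.sq_sqrt hp.le, Real.sq_sqrt hq.le]; ring

theorem exists_two_mode_solution_iff (ν f : ℝ) (ξ : ι → ℝ) (hν : 0 < ν) {p q : ι}
    (hpq : p ≠ q) :
    (∃ μ d, IsNormalizedSolution ν f ξ {p, q} μ d) ↔ |f * (ξ q - ξ p)| < ν := by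
  refine ⟨fun ⟨μ, d, h⟩ => ?_, exists_two_mode_solution ν f ξ hν hpq⟩
  obtain ⟨-, hdp, hdq⟩ := h.two_mode_amplitudes hν.ne' hpq
  have hp : 0 < d p ^ 2 := sq_pos_of_ne_zero (h.ne_zero_of_mem (mem_insert_self p {q}))
  have hq : 0 < d q ^ 2 :=
    sq_pos_of_ne_zero (h.ne_zero_of_mem (mem_insert_of_mem (mem_singleton_self q)))
  exact (abs_div_two_mul_lt_half_iff hν).1 (abs_lt.2 ⟨by linarith, by linarith⟩)

/-- in the pure Stark case ξ(n) = n, a normalized two-mode solution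
with solution-set S = {j, j+ℓ₁} exists iff ℓ₁ < ν/f, and in that case
μ = ν/2 + (f/2)(2j+ℓ₁), d_j² = 1/2 + fℓ₁/(2ν), d_{j+ℓ₁}² = 1/2 − fℓ₁/(2ν). -/
theorem two_mode_solution_iff (ν f : ℝ) (hν : 0 < ν) (hf : 0 < f) (j : ℤ) (ℓ₁ : ℤ)
    (hℓ : 0 < ℓ₁) :
    ((∃ (μ : ℝ) (d : ℤ → ℝ),
        (∀ n : ℤ, d n ≠ 0 ↔ n ∈ ({j, j + ℓ₁} : Finset ℤ)) ∧
        (∀ n : ℤ, (μ - ν * (d n) ^ 2) * d n = f * (n : ℝ) * d n) ∧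
        (∑ n ∈ ({j, j + ℓ₁} : Finset ℤ), (d n) ^ 2) = 1) ↔ (ℓ₁ : ℝ) < ν / f) ∧
    (∀ (μ : ℝ) (d : ℤ → ℝ),
        (∀ n : ℤ, d n ≠ 0 ↔ n ∈ ({j, j + ℓ₁} : Finset ℤ)) →
        (∀ n : ℤ, (μ - ν * (d n) ^ 2) * d n = f * (n : ℝ) * d n) →
        (∑ n ∈ ({j, j + ℓ₁} : Finset ℤ), (d n) ^ 2) = 1 →
        μ = ν / 2 + (f / 2) * (2 * (j : ℝ) + (ℓ₁ : ℝ)) ∧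
        (d j) ^ 2 = 1 / 2 + f * (ℓ₁ : ℝ) / (2 * ν) ∧
        (d (j + ℓ₁)) ^ 2 = 1 / 2 - f * (ℓ₁ : ℝ) / (2 * ν)) := by
  have hjk : j ≠ j + ℓ₁ := by omega
  have hgap : |f * (((j + ℓ₁ : ℤ) : ℝ) - j)| < ν ↔ (ℓ₁ : ℝ) < ν / f := by
    rw [Int.cast_add, add_sub_cancel_left, abs_of_pos (by positivity), lt_div_iff₀ hf, mul_comm]
  refine ⟨(exists_two_mode_solution_iff ν f (fun n : ℤ => (n : ℝ)) hν hjk).trans hgap,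
    fun μ d hS heq hsum => ?_⟩
  obtain ⟨hμ, hdj, hdk⟩ := IsNormalizedSolution.two_mode_amplitudes hν.ne' hjk ⟨hS, heq, hsum⟩
  push_cast at hμ hdj hdk
  exact ⟨by rw [hμ]; ring, by rw [hdj]; ring, by rw [hdk]; ring⟩
end

section
/- With ξ(n) = n, ν > 0, f > 0, the number of solution-sets S ⊂ ℕ with min S = 0 and |S| ≥ 2 satisfying ν/f > Σ_{ℓ∈S}(max S − ℓ) equals M(ν/f) = Σ_{0 < n < ν/f} Q(n), where Q(n) is the number of partitions of n into distinct positive parts. -/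
/-!
For `m = max S`, the reflection `ℓ ↦ m - ℓ` is an involution on finite sets containing `0`, and it
turns the gap sum `∑_{ℓ ∈ S} (m - ℓ)` into the plain sum of the reflected set `S*`. Since `S*`
contains `0`, deleting it leaves a set of distinct positive integers with the same sum, i.e. a
partition into distinct parts, non-empty exactly when `|S| ≥ 2`. Finally, for natural `n`,
`n < ν / f ↔ n < ⌈ν / f⌉₊`.
-/

open Finset

namespace Nat.Partition

def ofFinset (T : Finset ℕ) (hT : 0 ∉ T) : Partition (∑ t ∈ T, t) where
  parts := T.val
  parts_pos hi := Nat.pos_of_ne_zero fun h => hT (h ▸ hi)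
  parts_sum := T.sum_val

theorem sigma_ext {x y : Σ n, Partition n} (h : x.2.parts = y.2.parts) : x = y := by
  obtain ⟨n, p⟩ := x
  obtain ⟨m, q⟩ := y
  obtain rfl : n = m := p.parts_sum.symm.trans (h ▸ q.parts_sum)
  exact congrArg (Sigma.mk n) (Partition.ext h)

theorem ncard_setOf_sum_mem_eq_sum_card_distincts (s : Finset ℕ) :
    {T : Finset ℕ | 0 ∉ T ∧ ∑ t ∈ T, t ∈ s}.ncard = ∑ n ∈ s, #(distincts n) := by
  rw [← Finset.card_sigma, ← Set.ncard_coe_finset]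
  refine Set.ncard_congr (fun T hT => ⟨_, ofFinset T hT.1⟩) ?_ ?_ ?_
  · rintro T ⟨-, hsum⟩
    simp [distincts, ofFinset, hsum, T.nodup]
  · intro T T' _ _ h
    exact Finset.val_injective (congrArg (fun x => x.2.parts) h)
  · rintro ⟨n, p⟩ hp
    simp only [coe_sigma, Set.mem_sigma_iff, mem_coe, distincts, mem_filter, mem_univ,
      true_and] at hp
    have hsum : ∑ t ∈ ⟨p.parts, hp.2⟩, t = n := (Finset.sum_val _).symm.trans p.parts_sum
    exact ⟨⟨p.parts, hp.2⟩, ⟨fun h0 => (p.parts_pos h0).ne' rfl, hsum.symm ▸ hp.1⟩, sigma_ext rfl⟩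

end Nat.Partition

namespace Finset

def mirror (S : Finset ℕ) : Finset ℕ := S.image (S.sup id - ·)

def gapSum (S : Finset ℕ) : ℕ := ∑ ℓ ∈ S, (S.sup id - ℓ)

variable {S : Finset ℕ}

theorem le_sup_id {ℓ : ℕ} (h : ℓ ∈ S) : ℓ ≤ S.sup id := le_sup (f := id) h

theorem injOn_sup_sub : Set.InjOn (S.sup id - ·) S := fun a ha b hb h => by
  have := le_sup_id ha
  have := le_sup_id hb
  simp only at h
  omega

theorem sup_mirror (h0 : 0 ∈ S) : (mirror S).sup id = S.sup id :=
  le_antisymm (Finset.sup_le <| by simp [mirror]) (le_sup (f := id) (mem_image_of_mem _ h0))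

theorem zero_mem_mirror (hS : S.Nonempty) : 0 ∈ mirror S := by
  obtain ⟨m, hm, hsup⟩ := S.exists_mem_eq_sup hS id
  exact mem_image.2 ⟨m, hm, by simp [hsup]⟩

theorem mirror_mirror (h0 : 0 ∈ S) : mirror (mirror S) = S := by
  rw [mirror, sup_mirror h0, mirror, image_image]
  exact (image_congr fun ℓ hℓ => Nat.sub_sub_self (le_sup_id hℓ)).trans image_id'

theorem card_mirror : #(mirror S) = #S := card_image_of_injOn injOn_sup_sub

theorem sum_mirror : ∑ t ∈ mirror S, t = gapSum S := sum_image injOn_sup_sub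

theorem cast_gapSum {R : Type*} [AddCommGroupWithOne R] :
    ((gapSum S : ℕ) : R) = ∑ ℓ ∈ S, ((S.sup id : ℕ) - (ℓ : R)) := by
  rw [gapSum, Nat.cast_sum]
  exact sum_congr rfl fun ℓ hℓ => Nat.cast_sub (le_sup_id hℓ)

theorem gapSum_pos (h0 : 0 ∈ S) (h2 : 2 ≤ #S) : 0 < gapSum S := by
  obtain ⟨b, hb, hb0⟩ := exists_mem_ne h2 0
  have := le_sup_id hb
  exact sum_pos' (fun _ _ => Nat.zero_le _) ⟨0, h0, by omega⟩

theorem ncard_setOf_gapSum_mem (s : Set ℕ) (hs : 0 ∉ s) :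
    {S : Finset ℕ | 0 ∈ S ∧ 2 ≤ #S ∧ gapSum S ∈ s}.ncard =
      {T : Finset ℕ | 0 ∉ T ∧ ∑ t ∈ T, t ∈ s}.ncard := by
  refine Set.ncard_congr (fun S _ => (mirror S).erase 0) ?_ ?_ ?_
  · rintro S ⟨-, -, hg⟩
    exact ⟨notMem_erase 0 _, by rwa [sum_erase (f := fun t => t) _ rfl, sum_mirror]⟩
  · rintro S S' ⟨h0, -⟩ ⟨h0', -⟩ h
    rw [← mirror_mirror h0, ← mirror_mirror h0', ← insert_erase (zero_mem_mirror ⟨0, h0⟩), h,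
      insert_erase (zero_mem_mirror ⟨0, h0'⟩)]
  · rintro T ⟨hT0, hsum⟩
    have hT : T.Nonempty := nonempty_of_sum_ne_zero (ne_of_mem_of_not_mem hsum hs)
    have h0 : 0 ∈ insert 0 T := mem_insert_self 0 T
    refine ⟨mirror (insert 0 T), ⟨zero_mem_mirror ⟨0, h0⟩, ?_, ?_⟩, ?_⟩
    · rw [card_mirror, card_insert_of_notMem hT0]
      exact Nat.succ_le_succ hT.card_pos
    · rwa [← sum_mirror, mirror_mirror h0, sum_insert_zero (f := fun t => t) rfl]
    · rw [mirror_mirror h0, erase_insert hT0]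

end Finset

theorem counting_solution_sets_general (ν f : ℝ) :
    Set.ncard {S : Finset ℕ | 0 ∈ S ∧ 2 ≤ S.card ∧
        (∑ ℓ ∈ S, (((S.sup id : ℕ) : ℝ) - (ℓ : ℝ))) < ν / f}
      = ∑ n ∈ Finset.Ico 1 ⌈ν / f⌉₊, (Nat.Partition.distincts n).card := by
  have hset : {S : Finset ℕ | 0 ∈ S ∧ 2 ≤ S.card ∧
        (∑ ℓ ∈ S, (((S.sup id : ℕ) : ℝ) - (ℓ : ℝ))) < ν / f} =
      {S : Finset ℕ | 0 ∈ S ∧ 2 ≤ #S ∧ gapSum S ∈ (Ico 1 ⌈ν / f⌉₊ : Set ℕ)} := by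
    ext S
    simp only [Set.mem_ofPred_eq, coe_Ico, Set.mem_Ico, ← cast_gapSum, ← Nat.lt_ceil]
    exact and_congr_right fun h0 => and_congr_right fun h2 =>
      (and_iff_right (gapSum_pos h0 h2)).symm
  rw [hset, ncard_setOf_gapSum_mem _ (by simp)]
  exact Nat.Partition.ncard_setOf_sum_mem_eq_sum_card_distincts _

/-- the number of solution-sets S ⊂ ℕ with min S = 0 and |S| ≥ 2
satisfying ν/f > Σ_{ℓ∈S}(max S − ℓ) equals M(ν/f) = Σ_{0 < n < ν/f} Q(n),
where Q(n) is the number of partitions of n into distinct positive parts. -/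
theorem counting_solution_sets (ν f : ℝ) (hν : 0 < ν) (hf : 0 < f) :
    Set.ncard {S : Finset ℕ | 0 ∈ S ∧ 2 ≤ S.card ∧
        (∑ ℓ ∈ S, (((S.sup id : ℕ) : ℝ) - (ℓ : ℝ))) < ν / f}
      = ∑ n ∈ Finset.Ico 1 ⌈ν / f⌉₊, (Nat.Partition.distincts n).card :=
  counting_solution_sets_general ν f
end

section
/- Let ν > 0, f > 0 with ξ(n) = n, and let S = {j, j+1, …, j+N−1} be a block of N consecutive integers. Then S is a solution-set of the anticontinuous limit equation (i.e., μ^S − f n > 0 for all n ∈ S, where μ^S = ν/N + f j + f(N−1)/2) if and only if N(N−1)/2 < ν/f. -/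
/-! An antitone condition holds on a block of consecutive integers iff it holds at the block's
last element. For `n = j + N - 1` the quantity `μ^S - f n` is `ν / N - f (N - 1) / 2`, and its
positivity is the stated inequality after multiplying by `N / f`. -/

theorem Int.forall_mem_Ico_lt_iff_of_antitone {α : Type*} [Preorder α] {g : ℤ → α}
    (hg : Antitone g) {c : α} {a b : ℤ} (hab : a < b) :
    (∀ n ∈ Finset.Ico a b, c < g n) ↔ c < g (b - 1) := by
  refine ⟨fun h => h _ (Finset.mem_Ico.2 ⟨by omega, by omega⟩), fun h n hn => ?_⟩
  have hn : n ≤ b - 1 := by have := (Finset.mem_Ico.1 hn).2; omega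
  exact h.trans_le (hg hn)

theorem div_sub_mul_pred_half_pos_iff {ν f N : ℝ} (hf : 0 < f) (hN : 0 < N) :
    0 < ν / N - f * (N - 1) / 2 ↔ N * (N - 1) / 2 < ν / f := by
  rw [sub_pos, lt_div_iff₀ hN, lt_div_iff₀ hf]
  ring_nf

theorem consecutive_block_solution_set_iff_general (ν f : ℝ) (hf : 0 < f)
    (j : ℤ) (N : ℕ) (hN : 1 ≤ N) :
    let μ : ℝ := ν / N + f * (j : ℝ) + f * ((N : ℝ) - 1) / 2
    (∀ n ∈ Finset.Ico j (j + N), 0 < μ - f * (n : ℝ)) ↔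
      (N : ℝ) * ((N : ℝ) - 1) / 2 < ν / f := by
  intro μ
  have hdecr : Antitone fun n : ℤ => μ - f * n := fun m n hmn => by
    have : (m : ℝ) ≤ n := by exact_mod_cast hmn
    dsimp only
    gcongr
  have hlast : μ - f * ((j + N - 1 : ℤ) : ℝ) = ν / N - f * ((N : ℝ) - 1) / 2 := by
    simp only [μ]
    push_cast
    ring
  rw [Int.forall_mem_Ico_lt_iff_of_antitone hdecr (by omega), hlast,
    div_sub_mul_pred_half_pos_iff hf (by exact_mod_cast hN)]

/-- a block S = {j, …, j+N−1} of N consecutive integers is a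
solution-set (μ^S − f n > 0 for all n ∈ S, μ^S = ν/N + f j + f(N−1)/2)
iff N(N−1)/2 < ν/f. -/
theorem consecutive_block_solution_set_iff (ν f : ℝ) (hν : 0 < ν) (hf : 0 < f)
    (j : ℤ) (N : ℕ) (hN : 1 ≤ N) :
    let μ : ℝ := ν / N + f * (j : ℝ) + f * ((N : ℝ) - 1) / 2
    (∀ n ∈ Finset.Ico j (j + N), 0 < μ - f * (n : ℝ)) ↔
      (N : ℝ) * ((N : ℝ) - 1) / 2 < ν / f :=
  consecutive_block_solution_set_iff_general ν f hf j N hN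
end
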